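/- arXiv:1303.1445 — 4 statements merged into one kernel-verified Lean document; each statement's English description precedes it below -/
import Mathlib

section
/- Let κ : ℝ → ℝ be smooth and satisfy (κ')² = -(1/4)κ⁴ - (μ + G)κ² - 2λκ - ν and κ'' = -(1/2)κ³ - (μ+G)κ - λ for real constants μ, G, λ, ν. Define the complex-valued function q = (i/2)κ' + (1/4)κ² + G/4. Then q satisfies the stationary KdV equation (q')² + 2q³ + c q² + 2d q + e = 0, where c = μ - G/2, d = -ν/4 - G²/16 - μG/4, and e = cd + λ²/4 + μ²G/4 - νG/4. -/
open Complex

theorem miura_schwarzian_kdv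
    (κ : ℝ → ℝ) (μ G lam ν : ℝ) (hκ : ContDiff ℝ (⊤ : ℕ∞) κ)
    (h1 : ∀ x, (deriv κ x)^2
        = -(1/4) * (κ x)^4 - (μ + G) * (κ x)^2 - 2 * lam * κ x - ν)
    (h2 : ∀ x, iteratedDeriv 2 κ x = -(1/2) * (κ x)^3 - (μ + G) * κ x - lam)
    (q : ℝ → ℂ)
    (hq : ∀ x, q x = (I/2) * (deriv κ x : ℝ) + (1/4) * (κ x : ℂ)^2 + (G : ℂ)/4)
    (c d e : ℝ)
    (hc : c = μ - G/2)
    (hd : d = -ν/4 - G^2/16 - μ * G/4)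
    (he : e = c * d + lam^2/4 + μ^2 * G/4 - ν * G/4) :
    ∀ x, (deriv q x)^2 + 2 * (q x)^3 + (c : ℂ) * (q x)^2 + 2 * (d : ℂ) * q x + (e : ℂ) = 0 := by
  intro x
  have hκ1 : Differentiable ℝ κ := hκ.differentiable (by simp)
  have hκ2 : Differentiable ℝ (deriv κ) :=
    ((contDiff_infty_iff_deriv.mp (hκ.of_le (by simp))).2).differentiable (by simp)
  have hk : HasDerivAt (fun y => ((κ y : ℝ) : ℂ)) ((deriv κ x : ℝ) : ℂ) x :=
    (hκ1 x).hasDerivAt.ofReal_comp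
  have hk' : HasDerivAt (fun y => ((deriv κ y : ℝ) : ℂ)) ((deriv (deriv κ) x : ℝ) : ℂ) x :=
    (hκ2 x).hasDerivAt.ofReal_comp
  have hsq := (hk.mul hk).const_mul ((1:ℂ)/4)
  have hlin := hk'.const_mul (I/2)
  have hQ := (hlin.add hsq).add_const ((G:ℂ)/4)
  have hQ2 : HasDerivAt q _ x :=
    hQ.congr_of_eventuallyEq (Filter.Eventually.of_forall fun y => by rw [hq y]; simp only [Pi.add_apply, Pi.mul_apply]; ring)
  have hder : deriv q x
      = I/2 * ((iteratedDeriv 2 κ x : ℝ) : ℂ) + (1/2) * (κ x : ℂ) * ((deriv κ x : ℝ) : ℂ) := by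
    rw [hQ2.deriv, iteratedDeriv_succ, iteratedDeriv_one]; ring
  have hb2 := congrArg (Complex.ofReal) (h1 x)
  have hk2 := congrArg (Complex.ofReal) (h2 x)
  push_cast at hb2 hk2
  subst hc hd he
  rw [hder, hq x, hk2]
  push_cast
  linear_combination (-(μ:ℂ)/4 - (G:ℂ)/4 - (κ x : ℂ)^2/8 - I * ((deriv κ x : ℝ):ℂ)/4) * hb2
    + ((lam:ℂ)^2/4 + ((deriv κ x:ℝ):ℂ)^2*μ/4 + ((deriv κ x:ℝ):ℂ)^2*G/4
      + (κ x:ℂ)*μ*lam/2 + (κ x:ℂ)*G*lam/2 + (κ x:ℂ)^2*μ^2/4 + (κ x:ℂ)^2*G*μ/2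
      + (κ x:ℂ)^2*G^2/4 + 3/8*(κ x:ℂ)^2*((deriv κ x:ℝ):ℂ)^2 + (κ x:ℂ)^3*lam/4
      + (κ x:ℂ)^4*μ/4 + (κ x:ℂ)^4*G/4 + (κ x:ℂ)^6/16
      + I*((deriv κ x:ℝ):ℂ)^3/4) * Complex.I_sq
end

section
/- Let b, g₂ be real constants and κ : ℝ → ℝ a smooth function such that the complex function w(x) = -(i/4)κ'(x) - (1/8)κ(x)² - b satisfies w'' = 6w² - g₂/2. Then κ satisfies the stationary mKdV equation κ''' + (3/2)κ'κ² + 12bκ' = 0. -/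
open Complex
open scoped ContDiff

theorem imaginary_part_gives_mkdv
    (b g2 : ℝ) (κ : ℝ → ℝ) (hκ : ContDiff ℝ (⊤ : ℕ∞) κ)
    (w : ℝ → ℂ)
    (hw : ∀ x, w x = -(I/4) * (deriv κ x : ℝ) - (1/8) * (κ x : ℂ)^2 - (b : ℂ))
    (hode : ∀ x, deriv (deriv w) x = 6 * (w x)^2 - (g2 : ℂ)/2) :
    ∀ x, iteratedDeriv 3 κ x + (3/2) * deriv κ x * (κ x)^2 + 12 * b * deriv κ x = 0 := by
  intro x
  have h0 : ContDiff ℝ ∞ κ := hκ.of_le (by simp)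
  have h1 : ContDiff ℝ ∞ (deriv κ) := (contDiff_infty_iff_deriv.mp h0).2
  have h2 : ContDiff ℝ ∞ (deriv (deriv κ)) := (contDiff_infty_iff_deriv.mp h1).2
  have hdκ : ∀ y, HasDerivAt κ (deriv κ y) y :=
    fun y => (h0.differentiable (by norm_num) |>.differentiableAt).hasDerivAt
  have hdκ' : ∀ y, HasDerivAt (deriv κ) (deriv (deriv κ) y) y :=
    fun y => (h1.differentiable (by norm_num) |>.differentiableAt).hasDerivAt
  have hdκ'' : ∀ y, HasDerivAt (deriv (deriv κ)) (deriv (deriv (deriv κ)) y) y :=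
    fun y => (h2.differentiable (by norm_num) |>.differentiableAt).hasDerivAt
  have hwfun : w = fun y => -(I/4) * ((deriv κ y : ℝ) : ℂ) - (1/8) * (κ y : ℂ)^2 - (b : ℂ) :=
    funext hw
  -- first derivative of w
  have hw1 : ∀ y, HasDerivAt w
      (-(I/4) * ((deriv (deriv κ) y : ℝ) : ℂ) - (1/4) * ((κ y : ℂ) * ((deriv κ y : ℝ) : ℂ))) y := by
    intro y
    rw [hwfun]
    have A : HasDerivAt (fun z => ((deriv κ z : ℝ) : ℂ)) ((deriv (deriv κ) y : ℝ) : ℂ) y :=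
      (hdκ' y).ofReal_comp
    have B : HasDerivAt (fun z => ((κ z : ℝ) : ℂ)) ((deriv κ y : ℝ) : ℂ) y :=
      (hdκ y).ofReal_comp
    simp only [pow_two]
    have := ((A.const_mul (-(I/4))).sub ((B.mul B).const_mul ((1:ℂ)/8))).sub_const (b:ℂ)
    convert this using 1
    · rfl
    · rfl
    ring
  have hderivw : deriv w = fun y =>
      -(I/4) * ((deriv (deriv κ) y : ℝ) : ℂ) - (1/4) * ((κ y : ℂ) * ((deriv κ y : ℝ) : ℂ)) :=
    funext fun y => (hw1 y).deriv
  -- second derivative of w at x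
  have hw2 : HasDerivAt (deriv w)
      (-(I/4) * ((deriv (deriv (deriv κ)) x : ℝ) : ℂ)
        - (1/4) * (((deriv κ x : ℝ) : ℂ) * ((deriv κ x : ℝ) : ℂ) + (κ x : ℂ) * ((deriv (deriv κ) x : ℝ) : ℂ))) x := by
    rw [hderivw]
    have A : HasDerivAt (fun z => ((deriv (deriv κ) z : ℝ) : ℂ))
        ((deriv (deriv (deriv κ)) x : ℝ) : ℂ) x := (hdκ'' x).ofReal_comp
    have B : HasDerivAt (fun z => ((κ z : ℝ) : ℂ)) ((deriv κ x : ℝ) : ℂ) x := (hdκ x).ofReal_comp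
    have C : HasDerivAt (fun z => ((deriv κ z : ℝ) : ℂ)) ((deriv (deriv κ) x : ℝ) : ℂ) x :=
      (hdκ' x).ofReal_comp
    exact (A.const_mul (-(I/4))).sub ((B.mul C).const_mul ((1:ℂ)/4))
  have key : -(I/4) * ((deriv (deriv (deriv κ)) x : ℝ) : ℂ)
        - (1/4) * (((deriv κ x : ℝ) : ℂ) * ((deriv κ x : ℝ) : ℂ) + (κ x : ℂ) * ((deriv (deriv κ) x : ℝ) : ℂ))
      = 6 * (-(I/4) * (deriv κ x : ℝ) - (1/8) * (κ x : ℂ)^2 - (b : ℂ))^2 - (g2 : ℂ)/2 := by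
    rw [← hw x, ← hode x, hw2.deriv]
  have him := congrArg Complex.im key
  simp only [Complex.sub_im, Complex.sub_re, Complex.add_im, Complex.add_re, Complex.mul_im, Complex.mul_re, Complex.neg_im,
    Complex.neg_re, Complex.div_im, Complex.div_re, Complex.I_im, Complex.I_re,
    Complex.ofReal_im, Complex.ofReal_re, Complex.im_ofNat, Complex.re_ofNat,
    Complex.one_im, Complex.one_re, Complex.normSq_ofNat, pow_two] at him
  have h3 : iteratedDeriv 3 κ x = deriv (deriv (deriv κ)) x := by
    simp [iteratedDeriv_eq_iterate]
  rw [h3]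
  ring_nf at him ⊢
  linarith [him]
end

section
/- Let G > 0, λ = 0 and μ + G = G/2 > 0 (the Willmore Hopf case). Then for any real ν the cubic resolvent P̃₃(s) = s³ + 8(μ+G)s² + 16((μ+G)² - ν)s cannot have three nonnegative real roots unless it has a multiple root; consequently there are no orbitlike elastic curves corresponding to Willmore Hopf tori. -/
/-! Comparing the `s²`-coefficients (Vieta), the three roots of `P̃₃` add up to `-8(μ + G) = -4G < 0`,
so they cannot all be nonnegative. -/

section Cubic

variable {K : Type*}

theorem sum_roots_eq_neg_of_forall_cubic_eq [Field K] [CharZero K] {a b c s₁ s₂ s₃ : K}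
    (h : ∀ s : K, s ^ 3 + a * s ^ 2 + b * s + c = (s - s₁) * (s - s₂) * (s - s₃)) :
    s₁ + s₂ + s₃ = -a := by
  linear_combination (h 1 + h (-1) - 2 * h 0) / 2

theorem coeff_nonpos_of_forall_cubic_eq_of_roots_nonneg
    [Field K] [LinearOrder K] [IsStrictOrderedRing K] {a b c s₁ s₂ s₃ : K}
    (h : ∀ s : K, s ^ 3 + a * s ^ 2 + b * s + c = (s - s₁) * (s - s₂) * (s - s₃))
    (h₁ : 0 ≤ s₁) (h₂ : 0 ≤ s₂) (h₃ : 0 ≤ s₃) : a ≤ 0 := by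
  linarith [sum_roots_eq_neg_of_forall_cubic_eq h]

end Cubic

theorem no_orbitlike_willmore_hopf
    (G μ : ℝ) (hG : 0 < G) (hμ : μ + G = G/2) (ν : ℝ) :
    ¬ ∃ s₁ s₂ s₃ : ℝ, 0 ≤ s₁ ∧ 0 ≤ s₂ ∧ 0 ≤ s₃ ∧
        s₁ ≠ s₂ ∧ s₁ ≠ s₃ ∧ s₂ ≠ s₃ ∧
        ∀ s : ℝ, s^3 + 8 * (μ + G) * s^2 + 16 * ((μ + G)^2 - ν) * s
          = (s - s₁) * (s - s₂) * (s - s₃) := by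
  rintro ⟨s₁, s₂, s₃, h₁, h₂, h₃, -, -, -, h⟩
  have hP : ∀ s : ℝ, s ^ 3 + 8 * (μ + G) * s ^ 2 + 16 * ((μ + G) ^ 2 - ν) * s + 0
      = (s - s₁) * (s - s₂) * (s - s₃) := fun s => by rw [add_zero, h]
  have := coeff_nonpos_of_forall_cubic_eq_of_roots_nonneg hP h₁ h₂ h₃
  linarith
end

section
/- Let κ : ℝ → ℝ be smooth, G = 0, and let γ : ℝ → ℂ be an arclength-parametrized plane curve with curvature κ, i.e. γ' = exp(iθ) with θ' = κ. Define the lift γ̂ = a·(γ, 1) : ℝ → ℂ² where a : ℝ → ℂ is chosen so that det(γ̂, γ̂') = γ̂₁γ̂₂' − γ̂₂γ̂₁' is identically 1 (explicitly a = exp(-iθ/2) up to a constant). Then γ̂'' + qγ̂ = 0 with q = (i/2)κ' + (1/4)κ². -/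
open Complex

theorem schwarzian_of_plane_curve
    (κ θ : ℝ → ℝ) (hκ : ContDiff ℝ (⊤ : ℕ∞) κ) (hθ : ContDiff ℝ (⊤ : ℕ∞) θ)
    (hθ' : ∀ x, deriv θ x = κ x)
    (γ : ℝ → ℂ) (hγ : ∀ x, deriv γ x = Complex.exp (I * (θ x : ℝ)))
    (a : ℝ → ℂ) (c : ℂ)
    (ha : ∀ x, a x = c * Complex.exp (-I * (θ x : ℝ)/2))
    (hdet : ∀ x, (a x * γ x) * deriv a x - a x * deriv (fun t => a t * γ t) x = 1)
    (q : ℝ → ℂ)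
    (hq : ∀ x, q x = (I/2) * (deriv κ x : ℝ) + (1/4) * (κ x : ℂ)^2) :
    (∀ x, deriv (deriv (fun t => a t * γ t)) x + q x * (a x * γ x) = 0) ∧
    (∀ x, deriv (deriv a) x + q x * a x = 0) := by
  have haf : a = fun x => c * Complex.exp (-I * (θ x : ℝ)/2) := funext ha
  have hθd : ∀ x, HasDerivAt θ (κ x) x := fun x =>
    hθ' x ▸ (hθ.differentiable (by simp) x).hasDerivAt
  have hκd : ∀ x, HasDerivAt κ (deriv κ x) x := fun x =>
    (hκ.differentiable (by simp) x).hasDerivAt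
  have hγd : ∀ x, HasDerivAt γ (Complex.exp (I * (θ x : ℝ))) x := by
    intro x
    have hdiff : DifferentiableAt ℝ γ x := by
      by_contra h
      have h0 := deriv_zero_of_not_differentiableAt h
      rw [hγ x] at h0
      exact Complex.exp_ne_zero _ h0
    exact hγ x ▸ hdiff.hasDerivAt
  -- derivative of the inner exponent
  have hexpo : ∀ x, HasDerivAt (fun x => -I * (θ x : ℝ)/2) (-I * (κ x : ℝ)/2) x := by
    intro x
    exact (((hθd x).ofReal_comp).const_mul (-I)).div_const 2
  have hA : ∀ x, HasDerivAt a (a x * (-I * (κ x : ℝ)/2)) x := by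
    intro x
    rw [haf]
    have := ((hexpo x).cexp).const_mul c
    refine this.congr_deriv ?_
    ring
  have hAderiv : deriv a = fun x => a x * (-I * (κ x : ℝ)/2) :=
    funext fun x => (hA x).deriv
  -- second derivative of a
  have hκC : ∀ x, HasDerivAt (fun x => -I * ((κ x : ℝ):ℂ)/2) (-I * (deriv κ x : ℝ)/2) x :=
    fun x => (((hκd x).ofReal_comp).const_mul (-I)).div_const 2
  have hA2 : ∀ x, HasDerivAt (fun x => a x * (-I * (κ x : ℝ)/2))
      (a x * (-I * (κ x : ℝ)/2) * (-I * (κ x : ℝ)/2) + a x * (-I * (deriv κ x : ℝ)/2)) x := by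
    intro x
    exact (hA x).mul (hκC x)
  have hprod : ∀ x, HasDerivAt (fun t => a t * γ t)
      (a x * (-I * (κ x : ℝ)/2) * γ x + a x * Complex.exp (I * (θ x : ℝ))) x :=
    fun x => (hA x).mul (hγd x)
  have hprodderiv : deriv (fun t => a t * γ t)
      = fun x => a x * (-I * (κ x : ℝ)/2) * γ x + a x * Complex.exp (I * (θ x : ℝ)) :=
    funext fun x => (hprod x).deriv
  have hexp2 : ∀ x, HasDerivAt (fun x => Complex.exp (I * (θ x : ℝ)))
      (Complex.exp (I * (θ x : ℝ)) * (I * (κ x : ℝ))) x :=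
    fun x => (((hθd x).ofReal_comp).const_mul I).cexp
  constructor
  · intro x
    rw [hprodderiv]
    have h2 : HasDerivAt
        (fun x => a x * (-I * (κ x : ℝ)/2) * γ x + a x * Complex.exp (I * (θ x : ℝ)))
        ((a x * (-I * (κ x : ℝ)/2) * (-I * (κ x : ℝ)/2) + a x * (-I * (deriv κ x : ℝ)/2)) * γ x
          + a x * (-I * (κ x : ℝ)/2) * Complex.exp (I * (θ x : ℝ))
          + (a x * (-I * (κ x : ℝ)/2) * Complex.exp (I * (θ x : ℝ))
            + a x * (Complex.exp (I * (θ x : ℝ)) * (I * (κ x : ℝ))))) x :=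
      ((hA2 x).mul (hγd x)).add ((hA x).mul (hexp2 x))
    rw [h2.deriv, hq x]
    linear_combination (a x * γ x * ((κ x : ℂ))^2/4) * Complex.I_mul_I
  · intro x
    rw [hAderiv, (hA2 x).deriv, hq x]
    linear_combination (a x * ((κ x : ℂ))^2/4) * Complex.I_mul_I
end
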